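/- Let N ≥ 1 be an integer. For every Schwartz function u : ℝ^N → ℂ, the following integration-by-parts identity holds: 2 Re ∫_{ℝ^N} (x · ∇ū(x)) Δ²u(x) dx = (4 - N) ∫_{ℝ^N} |Δu(x)|² dx. -/

import Mathlib

open MeasureTheory

noncomputable section

/-- The Laplacian `Δu = ∑ j ∂²u/∂x_j²` of a function on `ℝ^N`. -/
def laplacian {N : ℕ} {F : Type*} [NormedAddCommGroup F] [NormedSpace ℝ F]
    (u : EuclideanSpace ℝ (Fin N) → F) (x : EuclideanSpace ℝ (Fin N)) : F :=
  ∑ j : Fin N,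
    fderiv ℝ (fun y => fderiv ℝ u y (EuclideanSpace.single j 1)) x (EuclideanSpace.single j 1)

/-!
Write `θu(x) = Du(x) x` for the Euler operator `x · ∇`. Since `[∂_v, θ] = ∂_v` (symmetry of the
second derivative), `Δθ = θΔ + 2Δ`; as `Δ` is symmetric on Schwartz functions,
`⟪θu, Δ²u⟫ = ⟪Δθu, Δu⟫ = ⟪θΔu, Δu⟫ + 2‖Δu‖²`. Finally `2 Re ⟪θv, v⟫ = ∫ x · ∇|v|² = -N ∫ |v|²`
because `div x = N`.
-/

open scoped SchwartzMap LineDeriv Laplacian InnerProductSpace ComplexConjugate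

namespace SchwartzMap

section NormedSpace

variable {E V F : Type*} [NormedAddCommGroup E] [NormedSpace ℝ E]
  [NormedAddCommGroup V] [NormedSpace ℝ V] [NormedAddCommGroup F] [InnerProductSpace ℝ F]

def eulerCLM : 𝓢(E, V) →L[ℝ] 𝓢(E, V) :=
  bilinLeftCLM (ContinuousLinearMap.id ℝ (E →L[ℝ] V)) (g := id) (by fun_prop) ∘L fderivCLM ℝ E V

theorem eulerCLM_apply (u : 𝓢(E, V)) (x : E) : eulerCLM u x = fderiv ℝ u x x := rfl

theorem lineDerivOp_eulerCLM (v : E) (u : 𝓢(E, V)) :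
    ∂_{v} (eulerCLM u) = eulerCLM (∂_{v} u) + ∂_{v} u := by
  ext x
  have hD2 : HasFDerivAt (fderiv ℝ u) (fderiv ℝ (fderiv ℝ u) x) x :=
    (fderivCLM ℝ E V u).hasFDerivAt x
  have hsymm : IsSymmSndFDerivAt ℝ u x :=
    (u.smooth 2).contDiffAt.isSymmSndFDerivAt (by simp)
  have hpartial : fderiv ℝ ⇑(∂_{v} u : 𝓢(E, V)) x = (fderiv ℝ (fderiv ℝ u) x).flip v :=
    (hD2.clm_apply (hasFDerivAt_const v x)).fderiv.trans (by ext; simp)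
  have heuler : HasFDerivAt (fun y => fderiv ℝ u y y)
      ((fderiv ℝ u x).comp (.id ℝ E) + (fderiv ℝ (fderiv ℝ u) x).flip x) x :=
    hD2.clm_apply (hasFDerivAt_id x)
  rw [lineDerivOp_apply_eq_fderiv, show ⇑(eulerCLM u) = fun y => fderiv ℝ u y y from rfl,
    heuler.fderiv]
  change _ = fderiv ℝ (∂_{v} u : 𝓢(E, V)) x x + fderiv ℝ u x v
  simp [hpartial, hsymm v x, add_comm]

variable [FiniteDimensional ℝ E] [MeasurableSpace E] [BorelSpace E] {μ : Measure E}

theorem re_integral_conj_mul [μ.HasTemperateGrowth] (f g : 𝓢(E, ℂ)) :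
    (∫ x, conj (f x) * g x ∂μ).re = ∫ x, ⟪f x, g x⟫_ℝ ∂μ := by
  have hint : Integrable (fun x => conj (f x) * g x) μ :=
    (pairing (ContinuousLinearMap.mul ℝ ℂ)
      (f.postcompCLM Complex.conjCLE.toContinuousLinearMap) g).integrable
  rw [← RCLike.re_to_complex, ← integral_re hint]
  simp [Complex.inner, mul_comm]

theorem integrable_clm_smul [μ.HasTemperateGrowth] (c : E →L[ℝ] ℝ) (f : 𝓢(E, V)) :
    Integrable (fun x => c x • f x) μ := by
  have := (smulLeftCLM V (c : E → ℝ) f).integrable (μ := μ)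
  rwa [smulLeftCLM_apply c.hasTemperateGrowth] at this

variable [μ.IsAddHaarMeasure]

theorem integral_fderiv_apply_self (g : 𝓢(E, V)) :
    ∫ x, fderiv ℝ g x x ∂μ = -(Module.finrank ℝ E : ℝ) • ∫ x, g x ∂μ := by
  let b := Module.finBasis ℝ E
  let c (i) : E →L[ℝ] ℝ := LinearMap.toContinuousLinearMap (b.coord i)
  -- `∫ div (x ↦ g x • x) = 0`, written in the coordinates of a basis
  have hexpand (x : E) : fderiv ℝ g x x = ∑ i, c i x • fderiv ℝ g x (b i) := by
    conv_lhs => rw [← b.sum_repr x, map_sum]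
    simp [c]
  have hpart (i) : ∫ x, c i x • fderiv ℝ g x (b i) ∂μ = -∫ x, g x ∂μ := by
    rw [integral_smul_fderiv_eq_neg_fderiv_smul_of_integrable ?_
      (integrable_clm_smul (c i) (∂_{b i} g)) (integrable_clm_smul (c i) g)
      (fun x _ => (c i).differentiableAt) (fun x _ => g.differentiableAt)]
    · simp only [ContinuousLinearMap.fderiv]
      simp [c]
    · simp only [ContinuousLinearMap.fderiv]
      simpa [c] using g.integrable (μ := μ)
  simp_rw [hexpand]
  rw [integral_finsetSum]
  · simp [hpart, ← Nat.cast_smul_eq_nsmul ℝ]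
  · exact fun i _ => integrable_clm_smul (c i) (∂_{b i} g)

theorem integral_inner_eulerCLM_self (v : 𝓢(E, F)) :
    2 * ∫ x, ⟪eulerCLM v x, v x⟫_ℝ ∂μ = -(Module.finrank ℝ E : ℝ) * ∫ x, ‖v x‖ ^ 2 ∂μ := by
  have hderiv (x : E) : fderiv ℝ (pairing (innerSL ℝ) v v) x x = 2 * ⟪eulerCLM v x, v x⟫_ℝ := by
    have h := (v.hasFDerivAt x).inner ℝ (v.hasFDerivAt x)
    rw [show ⇑(pairing (innerSL ℝ) v v) = fun y => ⟪v y, v y⟫_ℝ from rfl, h.fderiv]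
    simp [eulerCLM_apply, real_inner_comm]
    ring
  have hnorm (x : E) : pairing (innerSL ℝ) v v x = ‖v x‖ ^ 2 := real_inner_self_eq_norm_sq (v x)
  have h := integral_fderiv_apply_self (μ := μ) (pairing (innerSL ℝ) v v)
  simp only [hderiv, hnorm, integral_const_mul, smul_eq_mul] at h
  linarith

end NormedSpace

section InnerProductSpace

variable {E V F : Type*} [NormedAddCommGroup E] [InnerProductSpace ℝ E] [FiniteDimensional ℝ E]
  [NormedAddCommGroup V] [NormedSpace ℝ V] [NormedAddCommGroup F] [InnerProductSpace ℝ F]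

theorem laplacian_eulerCLM (u : 𝓢(E, V)) :
    Δ (eulerCLM u) = eulerCLM (Δ u) + (2 : ℝ) • Δ u := by
  simp only [laplacian_eq_sum (stdOrthonormalBasis ℝ E), lineDerivOp_eulerCLM,
    LineDerivAdd.lineDerivOp_add, map_sum, Finset.sum_add_distrib, two_smul, add_assoc]

variable [MeasurableSpace E] [BorelSpace E] {μ : Measure E} [μ.IsAddHaarMeasure]

theorem integral_inner_eulerCLM_laplacian_laplacian (u : 𝓢(E, F)) :
    2 * ∫ x, ⟪eulerCLM u x, Δ (Δ u) x⟫_ℝ ∂μ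
      = (4 - Module.finrank ℝ E : ℝ) * ∫ x, ‖Δ u x‖ ^ 2 ∂μ := by
  have hsymm : ∫ x, ⟪eulerCLM u x, Δ (Δ u) x⟫_ℝ ∂μ = ∫ x, ⟪Δ (eulerCLM u) x, Δ u x⟫_ℝ ∂μ :=
    integral_bilinear_laplacian_right_eq_left (eulerCLM u) (Δ u) (innerSL ℝ)
  have hsplit : ∫ x, ⟪Δ (eulerCLM u) x, Δ u x⟫_ℝ ∂μ
      = ∫ x, ⟪eulerCLM (Δ u) x, Δ u x⟫_ℝ ∂μ + 2 * ∫ x, ‖Δ u x‖ ^ 2 ∂μ := by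
    simp only [laplacian_eulerCLM, add_apply, smul_apply, inner_add_left, real_inner_smul_left,
      real_inner_self_eq_norm_sq]
    rw [integral_add ?_ ?_, integral_const_mul]
    · exact (pairing (innerSL ℝ) (eulerCLM (Δ u)) (Δ u)).integrable
    · exact ((Δ u).memLp 2 μ).integrable_norm_pow two_ne_zero |>.const_mul 2
  have := integral_inner_eulerCLM_self (μ := μ) (Δ u)
  rw [hsymm, hsplit]
  linarith

end InnerProductSpace

end SchwartzMap

theorem laplacian_schwartzMap {N : ℕ} {F : Type*} [NormedAddCommGroup F] [NormedSpace ℝ F]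
    (u : 𝓢(EuclideanSpace ℝ (Fin N), F)) :
    laplacian ⇑u = ⇑(Δ u : 𝓢(EuclideanSpace ℝ (Fin N), F)) := by
  funext x
  rw [SchwartzMap.laplacian_eq_sum (EuclideanSpace.basisFun (Fin N) ℝ), sum_apply]
  simp only [EuclideanSpace.basisFun_apply]
  rfl

theorem biharmonic_virial_identity_general (N : ℕ)
    (u : SchwartzMap (EuclideanSpace ℝ (Fin N)) ℂ) :
    2 * (∫ x, (starRingEnd ℂ) (fderiv ℝ (⇑u) x x) * laplacian (laplacian (⇑u)) x).re
      = (4 - (N : ℝ)) * ∫ x, ‖laplacian (⇑u) x‖ ^ 2 := by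
  have hvirial := SchwartzMap.integral_inner_eulerCLM_laplacian_laplacian (μ := volume) u
  rw [finrank_euclideanSpace_fin] at hvirial
  simp_rw [laplacian_schwartzMap, ← SchwartzMap.eulerCLM_apply, SchwartzMap.re_integral_conj_mul,
    hvirial]

/-- Fourth-order virial identity:
`2 Re ∫ (x·∇ū) Δ²u dx = (4 - N) ∫ |Δu|² dx`. -/
theorem biharmonic_virial_identity (N : ℕ) (hN : 1 ≤ N)
    (u : SchwartzMap (EuclideanSpace ℝ (Fin N)) ℂ) :
    2 * (∫ x, (starRingEnd ℂ) (fderiv ℝ (⇑u) x x) * laplacian (laplacian (⇑u)) x).re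
      = (4 - (N : ℝ)) * ∫ x, ‖laplacian (⇑u) x‖ ^ 2 :=
  biharmonic_virial_identity_general N u
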